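/- arXiv:2106.11502 — 2 statements merged into one kernel-verified Lean document; each statement's English description precedes it below -/
import Mathlib

section
/- The Ranked Pairs ZT voting method violates positive involvement: there exists a linear order L on the set of voters, a profile P, a candidate x ∈ RPZT_L(P), and a profile P' obtained from P by adding one new voter whose ballot ranks x in first place, such that x ∉ RPZT_L(P'). (A witness: P is the 5-voter profile on candidates {a,b,c,d} where the L-minimal voter has ballot cadb, two voters have ballot abdc, and two voters have ballot bdca, in which RPZT_L(P) = {b}; adding a new voter with ballot badc, where the L-minimal voter of the enlarged profile still has ballot cadb, yields RPZT_L(P') = {a}, so b loses.) -/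
open scoped Classical

/-- `r` is a strict linear order on the finite set `X`, relating only members of `X`. -/
def IsLinOn (X : Finset ℕ) (r : ℕ → ℕ → Prop) : Prop :=
  (∀ a b, r a b → a ∈ X ∧ b ∈ X) ∧
  (∀ a, ¬ r a a) ∧
  (∀ a b c, r a b → r b c → r a c) ∧
  (∀ a ∈ X, ∀ b ∈ X, a ≠ b → r a b ∨ r b a)

/-- A profile assigns to each voter in a nonempty finite set of voters a strict linear
order (ballot) on a nonempty finite set of candidates.  Voters and candidates are both
drawn from the infinite set `ℕ`. -/
structure Profile where
  voters : Finset ℕ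
  cands : Finset ℕ
  voters_nonempty : voters.Nonempty
  cands_nonempty : cands.Nonempty
  ballot : ℕ → ℕ → ℕ → Prop
  ballot_lin : ∀ i ∈ voters, IsLinOn cands (ballot i)

/-- `F` is a voting method: it assigns to each profile a nonempty set of winners
among the candidates of the profile. -/
def VotingMethod (F : Profile → Finset ℕ) : Prop :=
  ∀ P : Profile, (F P).Nonempty ∧ F P ⊆ P.cands

/-- The ballot `r` ranks `x` in first place among the candidates in `X`. -/
def RanksFirst (X : Finset ℕ) (r : ℕ → ℕ → Prop) (x : ℕ) : Prop :=
  x ∈ X ∧ ∀ y ∈ X, y ≠ x → r x y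

/-- `P'` is obtained from `P` by adding one new voter `j` whose ballot ranks `x` in
first place. -/
def AddVoter (P P' : Profile) (j x : ℕ) : Prop :=
  P'.cands = P.cands ∧ j ∉ P.voters ∧ P'.voters = insert j P.voters ∧
  (∀ i ∈ P.voters, ∀ a b, (P'.ballot i a b ↔ P.ballot i a b)) ∧
  RanksFirst P.cands (P'.ballot j) x

/-- `F` satisfies positive involvement (PI). -/
def SatisfiesPI (F : Profile → Finset ℕ) : Prop :=
  ∀ (P P' : Profile) (j x : ℕ), x ∈ F P → AddVoter P P' j x → x ∈ F P'

/-- The margin of `a` over `b` in the profile `P`. -/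
noncomputable def marginP (P : Profile) (a b : ℕ) : ℤ :=
  ((P.voters.filter (fun i => P.ballot i a b)).card : ℤ) -
    ((P.voters.filter (fun i => P.ballot i b a)).card : ℤ)

/-- The set of pairs `(x,y)` of distinct candidates with nonnegative margin. -/
def rpPairs (P : Profile) : Set (ℕ × ℕ) :=
  {p | p.1 ∈ P.cands ∧ p.2 ∈ P.cands ∧ p.1 ≠ p.2 ∧ 0 ≤ marginP P p.1 p.2}

/-- `r` is a strict linear order on the set `S` of pairs. -/
def IsLinOnPairs (S : Set (ℕ × ℕ)) (r : ℕ × ℕ → ℕ × ℕ → Prop) : Prop :=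
  (∀ p ∈ S, ¬ r p p) ∧
  (∀ p ∈ S, ∀ q ∈ S, ∀ u ∈ S, r p q → r q u → r p u) ∧
  (∀ p ∈ S, ∀ q ∈ S, p ≠ q → r p q ∨ r q p)

/-- `p` has higher priority than `q` according to the margins of `P` with ties
broken by the tie-breaking order `T`. -/
def higherPri (P : Profile) (T : ℕ × ℕ → ℕ × ℕ → Prop) (p q : ℕ × ℕ) : Prop :=
  marginP P q.1 q.2 < marginP P p.1 p.2 ∨
    (marginP P p.1 p.2 = marginP P q.1 q.2 ∧ T p q)

/-- The relation (set of pairs) `R` is acyclic. -/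
def AcyclicRel (R : Set (ℕ × ℕ)) : Prop :=
  ∀ x, ¬ Relation.TransGen (fun u v => (u, v) ∈ R) x x

/-- One step of the Ranked Pairs procedure: lock in the pair `p` if doing so keeps the
relation acyclic; otherwise lock in the reverse pair. -/
noncomputable def rpStep (R : Set (ℕ × ℕ)) (p : ℕ × ℕ) : Set (ℕ × ℕ) :=
  if AcyclicRel (insert p R) then insert p R else insert (p.2, p.1) R

/-- Processing the list `l` of pairs in order by the Ranked Pairs procedure. -/
noncomputable def rpRanking (l : List (ℕ × ℕ)) : Set (ℕ × ℕ) :=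
  l.foldl rpStep ∅

/-- `l` enumerates exactly the pairs of distinct candidates with nonnegative margin,
in decreasing order of priority. -/
def IsPriorityList (P : Profile) (T : ℕ × ℕ → ℕ × ℕ → Prop) (l : List (ℕ × ℕ)) : Prop :=
  (∀ p, p ∈ l ↔ p ∈ rpPairs P) ∧ l.Pairwise (higherPri P T)

/-- `L` is a strict linear order on the (infinite) set `ℕ` of all voters. -/
def IsLinOrderUniv (L : ℕ → ℕ → Prop) : Prop :=
  (∀ a, ¬ L a a) ∧ (∀ a b c, L a b → L b c → L a c) ∧ (∀ a b, a ≠ b → L a b ∨ L b a)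

/-- The lexicographic order on pairs derived from the ballot `b`. -/
def lexT (b : ℕ → ℕ → Prop) (p q : ℕ × ℕ) : Prop :=
  b p.1 q.1 ∨ (p.1 = q.1 ∧ b p.2 q.2)

/-- The Ranked Pairs ZT winners for the linear order `L` on voters: where `i` is the
`L`-minimal voter of `P`, `x` wins iff `x` is the maximum of the Ranked Pairs ranking
for `P` with the tie-breaking order being the lexicographic order derived from `i`'s
ballot. -/
noncomputable def RPZT (L : ℕ → ℕ → Prop) (P : Profile) : Finset ℕ :=
  P.cands.filter (fun x =>
    ∃ i ∈ P.voters, (∀ j ∈ P.voters, j ≠ i → L i j) ∧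
      ∃ l : List (ℕ × ℕ), IsPriorityList P (lexT (P.ballot i)) l ∧
        ∀ y ∈ P.cands, y ≠ x → (x, y) ∈ rpRanking l)

/-!
In `P` the margins are `b > c`, `b > d`, `d > c` by 3 and `c > a`, `a > d`, `a > b` by 1.
Tie-breaking by the first voter's ballot `cadb` locks in `c > a` before the other two pairs of
margin 1, and then `a > d` and `a > b` would close cycles through `d > c > a` and `b > d > a`,
so the ranking is `b > d > c > a`. The ballot `badc` raises `a > d` to 2 and turns `a–b` and
`a–c` into ties: now `a > d` is locked in first, `c > a` closes the cycle `c > a > d > c`, and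
the ranking becomes `a > b > d > c`.
-/

open Finset Relation

def listOrder (l : List ℕ) (x y : ℕ) : Prop :=
  x ∈ l ∧ y ∈ l ∧ l.idxOf x < l.idxOf y

instance (l : List ℕ) (x y : ℕ) : Decidable (listOrder l x y) := by
  unfold listOrder; infer_instance

instance (b : ℕ → ℕ → Prop) [DecidableRel b] (p q : ℕ × ℕ) : Decidable (lexT b p q) := by
  unfold lexT; infer_instance

theorem listOrder_irrefl (l : List ℕ) (x : ℕ) : ¬ listOrder l x x :=
  fun h => lt_irrefl _ h.2.2

theorem listOrder_trans (l : List ℕ) (x y z : ℕ) (hxy : listOrder l x y)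
    (hyz : listOrder l y z) : listOrder l x z :=
  ⟨hxy.1, hyz.2.1, hxy.2.2.trans hyz.2.2⟩

theorem isLinOn_listOrder (l : List ℕ) : IsLinOn l.toFinset (listOrder l) := by
  refine ⟨fun a b h => ⟨List.mem_toFinset.2 h.1, List.mem_toFinset.2 h.2.1⟩,
    listOrder_irrefl l, listOrder_trans l, fun a ha b hb hne => ?_⟩
  rw [List.mem_toFinset] at ha hb
  rcases lt_trichotomy (l.idxOf a) (l.idxOf b) with h | h | h
  · exact Or.inl ⟨ha, hb, h⟩
  · exact absurd ((List.idxOf_inj ha).1 h) hne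
  · exact Or.inr ⟨hb, ha, h⟩

theorem IsLinOn.asymm {X : Finset ℕ} {r : ℕ → ℕ → Prop} (h : IsLinOn X r) {a b : ℕ}
    (hab : r a b) : ¬ r b a :=
  fun hba => h.2.1 a (h.2.2.1 a b a hab hba)

theorem lexT_asymm {b : ℕ → ℕ → Prop} (hb : ∀ x y, b x y → ¬ b y x) {p q : ℕ × ℕ}
    (hpq : lexT b p q) : ¬ lexT b q p := by
  rintro (hqp | ⟨hqp, hqp'⟩) <;> rcases hpq with hpq | ⟨hpq, hpq'⟩
  · exact hb _ _ hpq hqp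
  · exact hb _ _ (hpq ▸ hqp) (hpq ▸ hqp)
  · exact hb _ _ (hqp ▸ hpq) (hqp ▸ hpq)
  · exact hb _ _ hpq' hqp'

theorem higherPri_asymm {P : Profile} {T : ℕ × ℕ → ℕ × ℕ → Prop}
    (hT : ∀ p q, T p q → ¬ T q p) {p q : ℕ × ℕ} (hpq : higherPri P T p q) :
    ¬ higherPri P T q p := by
  rintro (hqp | ⟨hqp, hqp'⟩) <;> rcases hpq with hpq | ⟨hpq, hpq'⟩
  · omega
  · omega
  · omega
  · exact hT _ _ hpq' hqp'

theorem IsPriorityList.eq {P : Profile} {T : ℕ × ℕ → ℕ × ℕ → Prop}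
    (hT : ∀ p q, T p q → ¬ T q p) {l₁ l₂ : List (ℕ × ℕ)}
    (h₁ : IsPriorityList P T l₁) (h₂ : IsPriorityList P T l₂) : l₁ = l₂ := by
  have asymm : ∀ p q, higherPri P T p q → ¬ higherPri P T q p :=
    fun _ _ => higherPri_asymm hT
  have nodup : ∀ l, IsPriorityList P T l → l.Nodup := fun l hl =>
    hl.2.imp <| by rintro p _ h rfl; exact asymm p p h h
  have perm : l₁.Perm l₂ := (List.perm_ext_iff_of_nodup (nodup _ h₁) (nodup _ h₂)).2
    fun p => (h₁.1 p).trans (h₂.1 p).symm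
  exact perm.eq_of_pairwise (fun p q _ _ hpq hqp => (asymm p q hpq hqp).elim) h₁.2 h₂.2

theorem mem_RPZT_iff {L : ℕ → ℕ → Prop} (hL : IsLinOrderUniv L) {P : Profile} {i : ℕ}
    (hi : i ∈ P.voters) (hmin : ∀ j ∈ P.voters, j ≠ i → L i j) {l : List (ℕ × ℕ)}
    (hl : IsPriorityList P (lexT (P.ballot i)) l) {x : ℕ} :
    x ∈ RPZT L P ↔ x ∈ P.cands ∧ ∀ y ∈ P.cands, y ≠ x → (x, y) ∈ rpRanking l := by
  simp only [RPZT, Finset.mem_filter]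
  refine and_congr_right fun _ => ⟨?_, fun h => ⟨i, hi, hmin, l, hl, h⟩⟩
  rintro ⟨i', hi', hmin', l', hl', h⟩
  obtain rfl : i' = i := by
    by_contra hne
    exact hL.1 i (hL.2.1 _ _ _ (hmin i' hi' hne) (hmin' i hi (Ne.symm hne)))
  have hT : ∀ p q, lexT (P.ballot i') p q → ¬ lexT (P.ballot i') q p :=
    fun _ _ => lexT_asymm fun _ _ => (P.ballot_lin i' hi').asymm
  exact hl'.eq hT hl ▸ h

theorem AcyclicRel.mono {R S : Set (ℕ × ℕ)} (h : AcyclicRel S) (hRS : R ⊆ S) :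
    AcyclicRel R :=
  fun x hx => h x (TransGen.mono (fun _ _ huv => hRS huv) x x hx)

theorem acyclicRel_of_irrefl_of_trans {r : ℕ → ℕ → Prop} (hirr : ∀ a, ¬ r a a)
    (htrans : ∀ a b c, r a b → r b c → r a c) : AcyclicRel {p | r p.1 p.2} := by
  have : IsTrans ℕ r := ⟨htrans⟩
  exact fun x hx => hirr x (transGen_eq_self (r := r) ▸ hx)

theorem rpStep_of_subset {R F : Set (ℕ × ℕ)} {p : ℕ × ℕ} (hF : AcyclicRel F)
    (hpR : insert p R ⊆ F) : rpStep R p = insert p R :=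
  if_pos (hF.mono hpR)

theorem rpStep_of_transGen {R : Set (ℕ × ℕ)} {p : ℕ × ℕ}
    (h : TransGen (fun u v => (u, v) ∈ R) p.2 p.1) : rpStep R p = insert (p.2, p.1) R :=
  if_neg fun hac => hac p.1 <| .head (Set.mem_insert p R) <|
    TransGen.mono (fun _ _ huv => Set.mem_insert_of_mem p huv) _ _ h

@[simps]
def Profile.ofBallots (V X : Finset ℕ) (hV : V.Nonempty) (hX : X.Nonempty) (b : ℕ → List ℕ)
    (hb : ∀ i ∈ V, (b i).toFinset = X) : Profile where
  voters := V
  cands := X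
  voters_nonempty := hV
  cands_nonempty := hX
  ballot i := listOrder (b i)
  ballot_lin i hi := hb i hi ▸ isLinOn_listOrder (b i)

def ballotMargin (V : Finset ℕ) (b : ℕ → List ℕ) (x y : ℕ) : ℤ :=
  #{i ∈ V | listOrder (b i) x y} - #{i ∈ V | listOrder (b i) y x}

section ofBallots

variable {V X : Finset ℕ} {hV : V.Nonempty} {hX : X.Nonempty} {b : ℕ → List ℕ}
  {hb : ∀ i ∈ V, (b i).toFinset = X}

theorem marginP_ofBallots : marginP (.ofBallots V X hV hX b hb) = ballotMargin V b := by
  ext x y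
  simp only [marginP, ballotMargin, Profile.ofBallots_voters, Profile.ofBallots_ballot]

theorem isPriorityList_ofBallots {T : ℕ × ℕ → ℕ × ℕ → Prop} {l : List (ℕ × ℕ)}
    (hl : ∀ p ∈ l, p.1 ∈ X ∧ p.2 ∈ X ∧ p.1 ≠ p.2 ∧ 0 ≤ ballotMargin V b p.1 p.2)
    (hcomplete : ∀ x ∈ X, ∀ y ∈ X, x ≠ y → 0 ≤ ballotMargin V b x y → (x, y) ∈ l)
    (hsorted : l.Pairwise fun p q => ballotMargin V b q.1 q.2 < ballotMargin V b p.1 p.2 ∨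
      (ballotMargin V b p.1 p.2 = ballotMargin V b q.1 q.2 ∧ T p q)) :
    IsPriorityList (.ofBallots V X hV hX b hb) T l := by
  unfold IsPriorityList rpPairs higherPri
  rw [marginP_ofBallots]
  exact ⟨fun p => ⟨hl p, fun ⟨hx, hy, hxy, hm⟩ => hcomplete _ hx _ hy hxy hm⟩, hsorted⟩

end ofBallots

/-- Candidates `a, b, c, d` are `0, 1, 2, 3`; voter `5` is the one added to `P`. -/
def ballotOf : ℕ → List ℕ
  | 0 => [2, 0, 3, 1]
  | 1 | 2 => [0, 1, 3, 2]
  | 3 | 4 => [1, 3, 2, 0]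
  | _ => [1, 0, 3, 2]

def witnessP : Profile :=
  .ofBallots (range 5) {0, 1, 2, 3} (by decide) (by decide) ballotOf (by decide)

def witnessP' : Profile :=
  .ofBallots (range 6) {0, 1, 2, 3} (by decide) (by decide) ballotOf (by decide)

def prioP : List (ℕ × ℕ) := [(3, 2), (1, 2), (1, 3), (2, 0), (0, 3), (0, 1)]

def prioP' : List (ℕ × ℕ) := [(3, 2), (1, 2), (1, 3), (0, 3), (2, 0), (0, 2), (0, 1), (1, 0)]

theorem isPriorityList_prioP : IsPriorityList witnessP (lexT (listOrder (ballotOf 0))) prioP :=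
  isPriorityList_ofBallots (by decide) (by decide) (by decide)

theorem isPriorityList_prioP' :
    IsPriorityList witnessP' (lexT (listOrder (ballotOf 0))) prioP' :=
  isPriorityList_ofBallots (by decide) (by decide) (by decide)

theorem rpRanking_prioP :
    rpRanking prioP = {(1, 0), (3, 0), (2, 0), (1, 3), (1, 2), (3, 2)} := by
  have hF := acyclicRel_of_irrefl_of_trans (listOrder_irrefl [1, 3, 2, 0]) (listOrder_trans _)
  rw [rpRanking, prioP, List.foldl_cons, rpStep_of_subset hF (by simp [listOrder]),
    List.foldl_cons, rpStep_of_subset hF (by simp [Set.insert_subset_iff, listOrder]),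
    List.foldl_cons, rpStep_of_subset hF (by simp [Set.insert_subset_iff, listOrder]),
    List.foldl_cons, rpStep_of_subset hF (by simp [Set.insert_subset_iff, listOrder]),
    List.foldl_cons, rpStep_of_transGen (.tail (b := 2) (.single (by simp)) (by simp)),
    List.foldl_cons, rpStep_of_transGen (.tail (b := 3) (.single (by simp)) (by simp)),
    List.foldl_nil, insert_empty_eq]

theorem rpRanking_prioP' :
    rpRanking prioP' = {(0, 1), (0, 2), (0, 3), (1, 3), (1, 2), (3, 2)} := by
  have hF := acyclicRel_of_irrefl_of_trans (listOrder_irrefl [0, 1, 3, 2]) (listOrder_trans _)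
  rw [rpRanking, prioP', List.foldl_cons, rpStep_of_subset hF (by simp [listOrder]),
    List.foldl_cons, rpStep_of_subset hF (by simp [Set.insert_subset_iff, listOrder]),
    List.foldl_cons, rpStep_of_subset hF (by simp [Set.insert_subset_iff, listOrder]),
    List.foldl_cons, rpStep_of_subset hF (by simp [Set.insert_subset_iff, listOrder]),
    List.foldl_cons, rpStep_of_transGen (.tail (b := 3) (.single (by simp)) (by simp)),
    List.foldl_cons, rpStep_of_subset hF (by simp [Set.insert_subset_iff, listOrder]),
    List.foldl_cons, rpStep_of_subset hF (by simp [Set.insert_subset_iff, listOrder]),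
    List.foldl_cons, rpStep_of_transGen (.single (by simp)),
    List.foldl_nil, insert_empty_eq, Set.insert_idem, Set.insert_idem]

theorem addVoter_witnessP : AddVoter witnessP witnessP' 5 1 :=
  ⟨rfl, by decide, by decide, fun _ _ _ _ => Iff.rfl,
    by simp [RanksFirst, witnessP, witnessP', ballotOf, listOrder]⟩

theorem rankedPairsZT_violates_PI :
    ∃ L : ℕ → ℕ → Prop, IsLinOrderUniv L ∧
      ∃ (P P' : Profile) (j x : ℕ),
        x ∈ RPZT L P ∧ AddVoter P P' j x ∧ x ∉ RPZT L P' := by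
  have hL : IsLinOrderUniv (· < ·) :=
    ⟨lt_irrefl, fun _ _ _ => lt_trans, fun _ _ => Nat.lt_or_gt_of_ne⟩
  have hmin (P : Profile) : ∀ j ∈ P.voters, j ≠ 0 → 0 < j := fun _ _ => Nat.pos_of_ne_zero
  refine ⟨(· < ·), hL, witnessP, witnessP', 5, 1, ?_, addVoter_witnessP, ?_⟩
  · rw [mem_RPZT_iff hL (by decide) (hmin _) isPriorityList_prioP, rpRanking_prioP]
    simp [witnessP]
  · rw [mem_RPZT_iff hL (by decide) (hmin _) isPriorityList_prioP', rpRanking_prioP']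
    simp [witnessP']
end

section
/- The Top Cycle voting method violates positive involvement: there exists a profile P, a candidate x ∈ TopCycle(P), and a profile P' obtained from P by adding one new voter whose ballot ranks x in first place, such that x ∉ TopCycle(P'). (A witness: P is the 2-voter profile on candidates {a,b,c} with ballots abc and cab, in which TopCycle(P) = {a,b,c}; adding a voter with ballot bac yields TopCycle(P') = {a}, so b loses.) -/
open scoped Classical

noncomputable def TopCycle (P : Profile) : Finset ℕ :=
  P.cands.filter (fun x => ∀ y ∈ P.cands,
    Relation.TransGen (fun a b => a ∈ P.cands ∧ b ∈ P.cands ∧ 0 ≤ marginP P a b) x y)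

/- auxiliary -/

def rk : ℕ → ℕ → ℕ
| 0, 0 => 0 | 0, 1 => 1 | 0, 2 => 2
| 1, 2 => 0 | 1, 0 => 1 | 1, 1 => 2
| 2, 1 => 0 | 2, 0 => 1 | 2, 2 => 2
| _, _ => 0

def C3 : Finset ℕ := {0, 1, 2}

def bal (i a b : ℕ) : Prop := a ∈ C3 ∧ b ∈ C3 ∧ rk i a < rk i b

instance balDec : ∀ i a b, Decidable (bal i a b) := fun i a b => by
  unfold bal; infer_instance

lemma bal_lin : ∀ i ∈ ({0,1,2} : Finset ℕ), IsLinOn C3 (bal i) := by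
  intro i hi
  refine ⟨fun a b h => ⟨h.1, h.2.1⟩, fun a h => lt_irrefl _ h.2.2,
    fun a b c h1 h2 => ⟨h1.1, h2.2.1, lt_trans h1.2.2 h2.2.2⟩, ?_⟩
  intro a ha b hb hab
  have ha' : a ∈ ({0,1,2} : Finset ℕ) := ha
  have hb' : b ∈ ({0,1,2} : Finset ℕ) := hb
  fin_cases hi <;> fin_cases ha' <;> fin_cases hb' <;> revert hab <;> decide

def Pc : Profile where
  voters := {0, 1}
  cands := C3
  voters_nonempty := ⟨0, by decide⟩
  cands_nonempty := ⟨0, by decide⟩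
  ballot := bal
  ballot_lin := fun i hi => bal_lin i (by fin_cases hi <;> decide)

def Pc' : Profile where
  voters := {0, 1, 2}
  cands := C3
  voters_nonempty := ⟨0, by decide⟩
  cands_nonempty := ⟨0, by decide⟩
  ballot := bal
  ballot_lin := fun i hi => bal_lin i (by fin_cases hi <;> decide)

lemma margin_eq (V : Finset ℕ) (P : Profile) (hV : P.voters = V) (hb : P.ballot = bal)
    (a b : ℕ) :
    marginP P a b = ((V.filter (fun i => bal i a b)).card : ℤ) -
      ((V.filter (fun i => bal i b a)).card : ℤ) := by
  subst hV
  simp only [marginP, hb]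

lemma marg (a b : ℕ) : marginP Pc a b = ((({0,1} : Finset ℕ).filter (fun i => bal i a b)).card : ℤ) -
      ((({0,1} : Finset ℕ).filter (fun i => bal i b a)).card : ℤ) := margin_eq _ _ rfl rfl a b

lemma marg' (a b : ℕ) : marginP Pc' a b = ((({0,1,2} : Finset ℕ).filter (fun i => bal i a b)).card : ℤ) -
      ((({0,1,2} : Finset ℕ).filter (fun i => bal i b a)).card : ℤ) := margin_eq _ _ rfl rfl a b

lemma m12 : 0 ≤ marginP Pc 1 2 := by rw [marg]; decide
lemma m20 : 0 ≤ marginP Pc 2 0 := by rw [marg]; decide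
lemma m21 : 0 ≤ marginP Pc 2 1 := by rw [marg]; decide
lemma m01 : 0 ≤ marginP Pc 0 1 := by rw [marg]; decide
lemma m02 : 0 ≤ marginP Pc 0 2 := by rw [marg]; decide

lemma m10' : marginP Pc' 1 0 < 0 := by rw [marg']; decide
lemma m20' : marginP Pc' 2 0 < 0 := by rw [marg']; decide

theorem topCycle_violates_PI :
    ∃ (P P' : Profile) (j x : ℕ),
      x ∈ TopCycle P ∧ AddVoter P P' j x ∧ x ∉ TopCycle P' := by
  refine ⟨Pc, Pc', 2, 1, ?_, ?_, ?_⟩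
  · -- 1 ∈ TopCycle Pc
    rw [TopCycle, Finset.mem_filter]
    refine ⟨by decide, ?_⟩
    intro y hy
    set R := fun a b => a ∈ Pc.cands ∧ b ∈ Pc.cands ∧ 0 ≤ marginP Pc a b with hR
    have e12 : Relation.TransGen R 1 2 :=
      Relation.TransGen.single ⟨by decide, by decide, m12⟩
    have e20 : Relation.TransGen R 1 0 :=
      e12.tail ⟨by decide, by decide, m20⟩
    have e21 : Relation.TransGen R 1 1 :=
      e12.tail ⟨by decide, by decide, m21⟩
    fin_cases hy
    · exact e20
    · exact e21
    · exact e12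
  · refine ⟨rfl, by decide, by decide, fun i _ a b => Iff.rfl, by decide, ?_⟩
    intro y hy hne
    -- bal 2 1 y  for y ∈ C3, y ≠ 1
    fin_cases hy
    · exact ⟨by decide, by decide, by decide⟩
    · exact absurd rfl hne
    · exact ⟨by decide, by decide, by decide⟩
  · -- 1 ∉ TopCycle Pc'
    rw [TopCycle, Finset.mem_filter]
    rintro ⟨-, h⟩
    have h10 := h 0 (by decide)
    -- invariant: from 1 we can only reach {1,2}
    have inv : ∀ z : ℕ, Relation.TransGen
        (fun a b => a ∈ Pc'.cands ∧ b ∈ Pc'.cands ∧ 0 ≤ marginP Pc' a b) 1 z →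
        z = 1 ∨ z = 2 := by
      intro z hz
      induction hz with
      | single hstep =>
        rcases hstep with ⟨-, hz, hm⟩
        fin_cases hz
        · exact absurd hm (not_le.mpr m10')
        · exact Or.inl rfl
        · exact Or.inr rfl
      | tail _ hstep ih =>
        rcases hstep with ⟨-, hz, hm⟩
        rename_i b c _
        fin_cases hz
        · rcases ih with h1 | h2
          · subst h1; exact absurd hm (not_le.mpr m10')
          · subst h2; exact absurd hm (not_le.mpr m20')
        · exact Or.inl rfl
        · exact Or.inr rfl
    rcases inv 0 h10 with h | h <;> simp at h
end
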